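/- Let V be a nonempty finite type with an acyclic edge relation E and pre-level function pℓ. If pℓ is injective, then every stable level function on (V, E) is equal to pℓ; that is, the pre-level function is the only stable level function. (This is the claim in §2.3 of the paper: 'If the pre-level function is injective, it is the only level function on T', under the standing convention that leveled trees are stable.) -/

import Mathlib

/-- A level function on a directed graph `(V, E)`: it takes values `≥ 1`, takes the
value `1` only at `E`-sources (vertices with no `E`-predecessor), and increases
strictly along edges. -/
def IsLevelFunction {V : Type*} (E : V → V → Prop) (ℓ : V → ℕ) : Prop :=
  (∀ v, 1 ≤ ℓ v) ∧ (∀ v, ℓ v = 1 → ∀ u, ¬ E u v) ∧ ∀ v w, E v w → ℓ v + 1 ≤ ℓ w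

/-- The defining recursion of the pre-level function: `pl v = 1` if `v` is an
`E`-source, and `pl v = 1 + max {pl u : E u v}` otherwise (the `max` over the empty
set being `0`). -/
def IsPreLevel {V : Type*} [Fintype V] (E : V → V → Prop) [DecidableRel E]
    (pl : V → ℕ) : Prop :=
  ∀ v, pl v = 1 + Finset.univ.sup fun u => if E u v then pl u else 0

/-- A function `ℓ : V → ℕ` is stable if every level `j` with `1 ≤ j ≤ max ℓ` is
attained. -/
def IsStable {V : Type*} [Fintype V] (ℓ : V → ℕ) : Prop :=
  ∀ j, 1 ≤ j → j ≤ Finset.univ.sup ℓ → ∃ v, ℓ v = j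

/-!
The pre-level function increases strictly along edges, so induction on its values shows
that it is the least level function: `pl ≤ ℓ`. Since `pl` is injective with values `≥ 1`,
`max pl ≥ |V|`; since `ℓ` is stable, `max ℓ ≤ |V|`. Hence `pl` and `ℓ` both map `V`
bijectively onto `{1, …, |V|}`, so they have the same sum, and `pl ≤ ℓ` forces `pl = ℓ`.
-/

open Finset

section Counting

variable {V : Type*} [Fintype V] {f g : V → ℕ}

theorem image_subset_Icc_one_sup (hf : ∀ v, 1 ≤ f v) : univ.image f ⊆ Icc 1 (univ.sup f) := by
  intro j hj
  obtain ⟨v, -, rfl⟩ := mem_image.1 hj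
  exact mem_Icc.2 ⟨hf v, le_sup (mem_univ v)⟩

theorem card_le_sup_of_injective (hf : ∀ v, 1 ≤ f v) (hinj : Function.Injective f) :
    Fintype.card V ≤ univ.sup f := by
  simpa [card_image_of_injective _ hinj] using card_le_card (image_subset_Icc_one_sup hf)

theorem IsStable.Icc_one_sup_subset_image (hst : IsStable f) :
    Icc 1 (univ.sup f) ⊆ univ.image f := by
  intro j hj
  obtain ⟨hj1, hj2⟩ := mem_Icc.1 hj
  obtain ⟨v, rfl⟩ := hst j hj1 hj2
  exact mem_image_of_mem f (mem_univ v)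

theorem IsStable.sup_le_card (hst : IsStable f) : univ.sup f ≤ Fintype.card V := by
  simpa using (card_le_card hst.Icc_one_sup_subset_image).trans card_image_le

theorem image_eq_Icc_one_card_of_injective (hf : ∀ v, 1 ≤ f v) (hinj : Function.Injective f)
    (hsup : univ.sup f = Fintype.card V) : univ.image f = Icc 1 (Fintype.card V) :=
  eq_of_subset_of_card_le (hsup ▸ image_subset_Icc_one_sup hf) (by
    simp [card_image_of_injective _ hinj])

theorem sum_eq_sum_Icc_of_image_eq (h : univ.image f = Icc 1 (Fintype.card V)) :
    ∑ v, f v = ∑ j ∈ Icc 1 (Fintype.card V), j := by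
  have hinj : Set.InjOn f (univ : Finset V) :=
    card_image_iff.1 (by simp [h])
  rw [← h, sum_image hinj]

theorem eq_of_le_of_injective_of_isStable (hf : ∀ v, 1 ≤ f v) (hinj : Function.Injective f)
    (hle : ∀ v, f v ≤ g v) (hst : IsStable g) : f = g := by
  have hg : ∀ v, 1 ≤ g v := fun v => (hf v).trans (hle v)
  have hsup_le : univ.sup f ≤ univ.sup g := sup_mono_fun fun v _ => hle v
  have hcard_le : Fintype.card V ≤ univ.sup f := card_le_sup_of_injective hf hinj
  have hsup_f : univ.sup f = Fintype.card V :=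
    le_antisymm (hsup_le.trans hst.sup_le_card) hcard_le
  have hsup_g : univ.sup g = Fintype.card V :=
    le_antisymm hst.sup_le_card (hcard_le.trans hsup_le)
  have himage_g : univ.image g = Icc 1 (Fintype.card V) :=
    hsup_g ▸ (image_subset_Icc_one_sup hg).antisymm hst.Icc_one_sup_subset_image
  have hsum : ∑ v, f v = ∑ v, g v := by
    rw [sum_eq_sum_Icc_of_image_eq (image_eq_Icc_one_card_of_injective hf hinj hsup_f),
      sum_eq_sum_Icc_of_image_eq himage_g]
  funext v
  exact (sum_eq_sum_iff_of_le fun v _ => hle v).1 hsum v (mem_univ v)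

end Counting

section PreLevel

variable {V : Type*} [Fintype V] {E : V → V → Prop} [DecidableRel E] {pl : V → ℕ}

theorem IsPreLevel.one_le (hpl : IsPreLevel E pl) (v : V) : 1 ≤ pl v :=
  hpl v ▸ Nat.le_add_right 1 _

theorem IsPreLevel.lt_of_edge (hpl : IsPreLevel E pl) {u v : V} (huv : E u v) : pl u < pl v := by
  have hu : pl u ≤ univ.sup fun w => if E w v then pl w else 0 := by
    simpa [huv] using le_sup (f := fun w => if E w v then pl w else 0) (mem_univ u)
  rw [hpl v]
  omega

theorem IsPreLevel.le_of_isLevelFunction (hpl : IsPreLevel E pl) {ℓ : V → ℕ}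
    (hℓ : IsLevelFunction E ℓ) (v : V) : pl v ≤ ℓ v := by
  obtain ⟨hℓ_pos, -, hℓ_edge⟩ := hℓ
  induction v using (InvImage.wf pl wellFounded_lt).induction with
  | _ v ih =>
    have hsup : (univ.sup fun u => if E u v then pl u else 0) ≤ ℓ v - 1 := by
      refine Finset.sup_le fun u _ => ?_
      split_ifs with huv
      · have := ih u (hpl.lt_of_edge huv)
        have := hℓ_edge u v huv
        omega
      · exact Nat.zero_le _
    have := hℓ_pos v
    rw [hpl v]
    omega

end PreLevel

theorem stable_level_function_eq_preLevel_of_injective_general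
    {V : Type*} [Fintype V] (E : V → V → Prop) [DecidableRel E]
    (pl : V → ℕ) (hpl : IsPreLevel E pl) (hinj : Function.Injective pl)
    (ℓ : V → ℕ) (hℓ : IsLevelFunction E ℓ) (hst : IsStable ℓ) :
    ℓ = pl :=
  (eq_of_le_of_injective_of_isStable hpl.one_le hinj (hpl.le_of_isLevelFunction hℓ) hst).symm

/-- If the pre-level function of a nonempty finite acyclic directed graph is injective,
then it is the only stable level function. -/
theorem stable_level_function_eq_preLevel_of_injective
    {V : Type*} [Fintype V] [Nonempty V] (E : V → V → Prop) [DecidableRel E]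
    (hacyc : Irreflexive (Relation.TransGen E))
    (pl : V → ℕ) (hpl : IsPreLevel E pl) (hinj : Function.Injective pl)
    (ℓ : V → ℕ) (hℓ : IsLevelFunction E ℓ) (hst : IsStable ℓ) :
    ℓ = pl :=
  stable_level_function_eq_preLevel_of_injective_general E pl hpl hinj ℓ hℓ hst
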